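/- Let $A$ be an $n \times n$ real symmetric positive definite matrix, $\tau > 0$, $b \in \mathbb{R}^n$, and suppose $\alpha \in \mathbb{R}^n$ with $\alpha \ne 0$ satisfies $-b + A\alpha + \tau \|\alpha\|^{-1}\alpha = 0$. Then $\alpha = (A + \tau\|\alpha\|^{-1} I_n)^{-1} b$, and in particular $\|b\| > \tau$. -/

import Mathlib

/-!
With `c = τ / ‖α‖ > 0` the stationarity equation reads `(A + c I) α = b`, and `A + c I` is
positive definite, hence invertible. Pairing with `α` gives
`α ⬝ b = αᵀ A α + c ‖α‖² > c ‖α‖² = τ ‖α‖`, while Cauchy–Schwarz gives `α ⬝ b ≤ ‖α‖ ‖b‖`.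
-/

open Matrix

noncomputable def vnorm {n : ℕ} (x : Fin n → ℝ) : ℝ := Real.sqrt (∑ i, x i ^ 2)

lemma Matrix.PosDef.add_smul_one {ι : Type*} [Fintype ι] [DecidableEq ι]
    {A : Matrix ι ι ℝ} (hA : A.PosDef) {c : ℝ} (hc : 0 ≤ c) : (A + c • 1).PosDef :=
  hA.add_posSemidef (PosSemidef.one.smul hc)

lemma Matrix.eq_inv_mulVec_of_mulVec_eq {ι K : Type*} [Fintype ι] [DecidableEq ι] [Field K]
    {M : Matrix ι ι K} (hM : IsUnit M) {x b : ι → K} (h : M *ᵥ x = b) : x = M⁻¹ *ᵥ b := by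
  rw [← h, mulVec_mulVec, nonsing_inv_mul M ((isUnit_iff_isUnit_det M).mp hM), one_mulVec]

section vnorm

variable {n : ℕ}

lemma vnorm_eq_norm_toLp (x : Fin n → ℝ) : vnorm x = ‖WithLp.toLp 2 x‖ := by
  simp [vnorm, EuclideanSpace.norm_eq, sq_abs]

lemma vnorm_pos {x : Fin n → ℝ} (hx : x ≠ 0) : 0 < vnorm x := by
  simpa [vnorm_eq_norm_toLp] using hx

lemma dotProduct_self_eq_vnorm_sq (x : Fin n → ℝ) : x ⬝ᵥ x = vnorm x ^ 2 := by
  rw [vnorm_eq_norm_toLp, ← real_inner_self_eq_norm_sq, EuclideanSpace.inner_toLp_toLp]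
  rfl

lemma dotProduct_le_vnorm_mul_vnorm (x y : Fin n → ℝ) : x ⬝ᵥ y ≤ vnorm x * vnorm y := by
  simpa [vnorm_eq_norm_toLp, EuclideanSpace.inner_toLp_toLp, dotProduct_comm]
    using real_inner_le_norm (WithLp.toLp 2 x) (WithLp.toLp 2 y)

lemma Matrix.PosDef.mul_vnorm_lt_vnorm_mulVec_add_smul {A : Matrix (Fin n) (Fin n) ℝ}
    (hA : A.PosDef) {x : Fin n → ℝ} (hx : x ≠ 0) (c : ℝ) :
    c * vnorm x < vnorm (A *ᵥ x + c • x) := by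
  have hquad : 0 < x ⬝ᵥ (A *ᵥ x) := by simpa using hA.dotProduct_mulVec_pos hx
  have hpos := vnorm_pos hx
  refine lt_of_mul_lt_mul_left ?_ hpos.le
  calc vnorm x * (c * vnorm x) = c * (x ⬝ᵥ x) := by rw [dotProduct_self_eq_vnorm_sq]; ring
    _ < x ⬝ᵥ (A *ᵥ x + c • x) := by rw [dotProduct_add, dotProduct_smul, smul_eq_mul]; linarith
    _ ≤ vnorm x * vnorm (A *ᵥ x + c • x) := dotProduct_le_vnorm_mul_vnorm _ _

end vnorm

/-- Stationarity equation for a nonzero group: if `α ≠ 0` satisfies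
`-b + Aα + τ‖α‖⁻¹ α = 0` with `A` symmetric positive definite and `τ > 0`, then
`α = (A + τ‖α‖⁻¹ I)⁻¹ b` and `‖b‖ > τ`. -/
theorem group_stationarity (n : ℕ) (A : Matrix (Fin n) (Fin n) ℝ)
    (hA : A.PosDef) (τ : ℝ) (hτ : 0 < τ) (b α : Fin n → ℝ) (hα : α ≠ 0)
    (hstat : -b + A.mulVec α + (vnorm α)⁻¹ • (τ • α) = 0) :
    α = (A + (τ * (vnorm α)⁻¹) • (1 : Matrix (Fin n) (Fin n) ℝ))⁻¹.mulVec b ∧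
      τ < vnorm b := by
  set c := τ * (vnorm α)⁻¹
  have hα_pos := vnorm_pos hα
  have hb : A *ᵥ α + c • α = b := by
    rw [smul_smul, mul_comm (vnorm α)⁻¹, add_assoc, neg_add_eq_zero] at hstat
    exact hstat.symm
  have hMb : (A + c • 1) *ᵥ α = b := by
    rw [add_mulVec, smul_mulVec, one_mulVec, hb]
  refine ⟨eq_inv_mulVec_of_mulVec_eq (hA.add_smul_one (by positivity)).isUnit hMb, ?_⟩
  have hτ_eq : τ = c * vnorm α := (inv_mul_cancel_right₀ hα_pos.ne' τ).symm
  rw [hτ_eq, ← hb]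
  exact hA.mul_vnorm_lt_vnorm_mulVec_add_smul hα c
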